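/- Let k be an algebraically closed field of characteristic zero and let R be a commutative affine (finitely generated) k-algebra equipped with a Poisson bracket. Assume that for every Poisson-primitive ideal P of R the singleton {P} is a locally closed subset of P.spec R. Then the map from the maximal ideal space maxspec R (with its Zariski topology) to P.prim R sending each maximal ideal m to its Poisson core P(m) is a continuous surjection, and the topology on P.prim R coincides with the quotient topology induced by this map; that is, a subset X ⊆ P.prim R is closed if and only if {m ∈ maxspec R : P(m) ∈ X} is closed in maxspec R. -/

import Mathlib

/-- A Poisson bracket on a commutative `k`-algebra `R`: a `k`-bilinear,
antisymmetric map satisfying the Jacobi and Leibniz identities. -/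
structure PoissonBracket (k : Type*) (R : Type*) [CommRing k] [CommRing R] [Algebra k R] where
  bracket : R → R → R
  add_left : ∀ a b c : R, bracket (a + b) c = bracket a c + bracket b c
  add_right : ∀ a b c : R, bracket a (b + c) = bracket a b + bracket a c
  smul_left : ∀ (t : k) (a b : R), bracket (t • a) b = t • bracket a b
  smul_right : ∀ (t : k) (a b : R), bracket a (t • b) = t • bracket a b
  antisymm : ∀ a b : R, bracket a b = - bracket b a
  jacobi : ∀ a b c : R,
    bracket a (bracket b c) + bracket b (bracket c a) + bracket c (bracket a b) = 0
  leibniz : ∀ a b c : R, bracket a (b * c) = bracket a b * c + b * bracket a c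

/-- An ideal `I` is a Poisson ideal if `{R, I} ⊆ I`. -/
def IsPoissonIdeal {k R : Type*} [CommRing k] [CommRing R] [Algebra k R]
    (B : PoissonBracket k R) (I : Ideal R) : Prop :=
  ∀ a : R, ∀ x ∈ I, B.bracket a x ∈ I

/-- The Poisson core of an ideal `J`: the largest Poisson ideal contained in `J`,
i.e. the sum of all Poisson ideals contained in `J`. -/
def poissonCore {k R : Type*} [CommRing k] [CommRing R] [Algebra k R]
    (B : PoissonBracket k R) (J : Ideal R) : Ideal R :=
  sSup {I : Ideal R | IsPoissonIdeal B I ∧ I ≤ J}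

/-- A Poisson-primitive ideal: the Poisson core of some maximal ideal. -/
def IsPoissonPrimitive {k R : Type*} [CommRing k] [CommRing R] [Algebra k R]
    (B : PoissonBracket k R) (P : Ideal R) : Prop :=
  ∃ m : Ideal R, m.IsMaximal ∧ poissonCore B m = P

/-!
In characteristic zero the Poisson core of a prime ideal is prime: the radical of a Poisson ideal
is Poisson, and in a Noetherian ring the minimal primes of a radical Poisson ideal are Poisson.
So `m ↦ P(m)` maps the maximal spectrum onto the Poisson-primitive spectrum, and it is continuous
because `s ⊆ P(m)` iff the Poisson ideal generated by `s` lies in `m`.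

If `Q` is a locally closed point of the Poisson prime spectrum, there is `g ∉ Q` such that every
Poisson prime above `Q` avoiding `g` equals `Q`; hence every maximal ideal above `Q` avoiding `g`
has Poisson core `Q`. Since `R` is a Jacobson ring these maximal ideals meet in `Q`, so if the
preimage of `X` is `V(s)` then `Q ∈ X` iff `s ⊆ Q`, i.e. `X` is closed.
-/

namespace PoissonBracket

variable {k R : Type*} [CommRing k] [CommRing R] [Algebra k R] (B : PoissonBracket k R)

def derivation (a : R) : Derivation k R R :=
  Derivation.mk' ⟨⟨B.bracket a, B.add_right a⟩, fun t b => B.smul_right t a b⟩ fun b c => by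
    simp only [LinearMap.coe_mk, AddHom.coe_mk, smul_eq_mul, B.leibniz]
    ring

lemma bracket_zero (a : R) : B.bracket a 0 = 0 := (B.derivation a).map_zero

end PoissonBracket

lemma Ideal.mem_of_nsmul_mem (k : Type*) {R : Type*} [Field k] [CharZero k] [CommRing R]
    [Algebra k R] {I : Ideal R} {n : ℕ} (hn : n ≠ 0) {x : R} (h : n • x ∈ I) : x ∈ I := by
  have hunit : IsUnit (n : R) := by
    simpa using (IsUnit.mk0 (n : k) (Nat.cast_ne_zero.mpr hn)).map (algebraMap k R)
  rwa [nsmul_eq_mul, I.unit_mul_mem_iff_mem hunit] at h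

section Derivation

variable {k R : Type*} [Field k] [CharZero k] [CommRing R] [Algebra k R]

/-- Each application of `D` trades a factor `x` for two factors `D x`; the integer coefficients
this produces are invertible in characteristic zero. -/
theorem Derivation.pow_mul_pow_mem (D : Derivation k R R) {I : Ideal R}
    (hI : ∀ y ∈ I, D y ∈ I) {x : R} {m : ℕ} (hx : x ^ (m + 1) ∈ I) :
    ∀ j ≤ m, D x ^ (2 * j + 1) * x ^ (m - j) ∈ I := by
  intro j
  induction j with
  | zero =>
    intro _
    have h := hI _ hx
    rw [D.leibniz_pow, Nat.add_sub_cancel, smul_eq_mul] at h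
    simpa [mul_comm] using Ideal.mem_of_nsmul_mem k m.succ_ne_zero h
  | succ j ih =>
    intro hj
    obtain ⟨l, hl⟩ : ∃ l, m - j = l + 1 := ⟨m - (j + 1), by omega⟩
    have hy := ih (by omega)
    rw [hl] at hy
    have hDy := hI _ hy
    have key : (l + 1) • (D x ^ (2 * (j + 1) + 1) * x ^ l) =
        D x * D (D x ^ (2 * j + 1) * x ^ (l + 1)) -
          (2 * j + 1) • D (D x) * (D x ^ (2 * j + 1) * x ^ (l + 1)) := by
      simp only [D.leibniz, D.leibniz_pow, smul_eq_mul, nsmul_eq_mul, Nat.add_sub_cancel]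
      push_cast
      ring
    have hmem : (l + 1) • (D x ^ (2 * (j + 1) + 1) * x ^ l) ∈ I := by
      rw [key]
      exact I.sub_mem (I.mul_mem_left _ hDy) (I.mul_mem_left _ hy)
    rw [show m - (j + 1) = l by omega]
    exact Ideal.mem_of_nsmul_mem k l.succ_ne_zero hmem

theorem Derivation.map_mem_radical (D : Derivation k R R) {I : Ideal R}
    (hI : ∀ y ∈ I, D y ∈ I) {x : R} (hx : x ∈ I.radical) : D x ∈ I.radical := by
  obtain ⟨n, hn⟩ := hx
  cases n with
  | zero => exact ⟨0, by simpa using hn⟩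
  | succ m => exact ⟨2 * m + 1, by simpa using D.pow_mul_pow_mem hI hn m le_rfl⟩

end Derivation

/-- A minimal prime `p` of `C` is a colon ideal `(C : y)`, and `y ∉ p` because `C` is radical;
`y D x = D (x y) - x D y ∈ p` for `x ∈ p` then forces `D x ∈ p`. -/
theorem Derivation.map_mem_of_mem_minimalPrimes {k R : Type*} [CommRing k] [CommRing R]
    [Algebra k R] [IsNoetherianRing R] (D : Derivation k R R) {C p : Ideal R}
    (hC : ∀ y ∈ C, D y ∈ C) (hrad : C.IsRadical) (hp : p ∈ C.minimalPrimes) :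
    ∀ x ∈ p, D x ∈ p := by
  have hcolon : (C : Submodule R R).colon {1} = C := by
    ext; simp [Submodule.mem_colon_singleton]
  obtain ⟨y, rfl⟩ := Submodule.exists_eq_colon_of_mem_minimalPrimes (hcolon ▸ hp)
  have hprime := hp.1.1
  have hy : y ∉ C.colon {y} := fun hyy => hprime.ne_top <| (Ideal.eq_top_iff_one _).mpr <|
    Submodule.mem_colon_singleton.mpr <| by
      simpa using hrad ⟨2, by simpa [sq] using Submodule.mem_colon_singleton.mp hyy⟩
  intro x hx
  have hxy : x * y ∈ C := Submodule.mem_colon_singleton.mp hx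
  have hD : y * D x ∈ C.colon {y} := by
    have h := hp.1.2 (hC _ hxy)
    rw [D.leibniz, smul_eq_mul, smul_eq_mul] at h
    simpa using (C.colon {y}).sub_mem h ((C.colon {y}).mul_mem_right (D y) hx)
  exact (hprime.mem_or_mem hD).resolve_left hy

section PoissonIdeal

variable {k R : Type*} [CommRing k] [CommRing R] [Algebra k R] {B : PoissonBracket k R}

lemma IsPoissonIdeal.of_mem_minimalPrimes [IsNoetherianRing R] {C p : Ideal R}
    (hC : IsPoissonIdeal B C) (hrad : C.IsRadical) (hp : p ∈ C.minimalPrimes) :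
    IsPoissonIdeal B p :=
  fun a => (B.derivation a).map_mem_of_mem_minimalPrimes (hC a) hrad hp

lemma isPoissonIdeal_sSup {S : Set (Ideal R)} (hS : ∀ I ∈ S, IsPoissonIdeal B I) :
    IsPoissonIdeal B (sSup S) := by
  intro a x hx
  rw [sSup_eq_iSup'] at hx ⊢
  refine Submodule.iSup_induction _ (motive := fun y => B.bracket a y ∈ ⨆ I : S, (I : Ideal R))
    hx (fun I y hy => Ideal.mem_iSup_of_mem I (hS I I.2 a y hy)) ?_ fun y z hy hz => ?_
  · rw [B.bracket_zero]
    exact zero_mem _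
  · rw [B.add_right]
    exact add_mem hy hz

lemma isPoissonIdeal_sInf {S : Set (Ideal R)} (hS : ∀ I ∈ S, IsPoissonIdeal B I) :
    IsPoissonIdeal B (sInf S) :=
  fun a _ hx => Ideal.mem_sInf.mpr fun _ hI => hS _ hI a _ (Ideal.mem_sInf.mp hx hI)

variable (B)

lemma isPoissonIdeal_poissonCore (J : Ideal R) : IsPoissonIdeal B (poissonCore B J) :=
  isPoissonIdeal_sSup fun _ hI => hI.1

lemma poissonCore_le (J : Ideal R) : poissonCore B J ≤ J :=
  sSup_le fun _ hI => hI.2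

lemma le_poissonCore {I J : Ideal R} (hI : IsPoissonIdeal B I) (hIJ : I ≤ J) :
    I ≤ poissonCore B J :=
  le_sSup ⟨hI, hIJ⟩

lemma IsPoissonPrimitive.isPoissonIdeal {P : Ideal R} (hP : IsPoissonPrimitive B P) :
    IsPoissonIdeal B P := by
  obtain ⟨m, -, rfl⟩ := hP
  exact isPoissonIdeal_poissonCore B m

def poissonSpan (s : Set R) : Ideal R :=
  sInf {I : Ideal R | IsPoissonIdeal B I ∧ s ⊆ I}

lemma poissonSpan_le_iff {s : Set R} {J : Ideal R} :
    poissonSpan B s ≤ J ↔ s ⊆ poissonCore B J := by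
  constructor
  · intro h x hx
    refine le_poissonCore B (isPoissonIdeal_sInf fun _ hI => hI.1) h ?_
    exact Ideal.mem_sInf.mpr fun _ hI => hI.2 hx
  · intro h
    have hmem : poissonCore B J ∈ {I : Ideal R | IsPoissonIdeal B I ∧ s ⊆ I} :=
      ⟨isPoissonIdeal_poissonCore B J, h⟩
    exact (sInf_le hmem).trans (poissonCore_le B J)

end PoissonIdeal

section CharZero

variable {k R : Type*} [Field k] [CharZero k] [CommRing R] [Algebra k R] {B : PoissonBracket k R}

lemma IsPoissonIdeal.radical {I : Ideal R} (hI : IsPoissonIdeal B I) :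
    IsPoissonIdeal B I.radical := fun a _ hx =>
  show B.derivation a _ ∈ I.radical from (B.derivation a).map_mem_radical (hI a) hx

variable (B)

/-- The radical of `P(J)` is a Poisson ideal inside `J`, so `P(J)` is radical; a minimal prime
of `P(J)` below `J` is then a Poisson ideal inside `J`, hence equal to `P(J)`. -/
theorem isPrime_poissonCore [IsNoetherianRing R] {J : Ideal R}
    (hJ : J.IsPrime) : (poissonCore B J).IsPrime := by
  have hC := isPoissonIdeal_poissonCore B J
  have hrad : (poissonCore B J).IsRadical :=
    le_poissonCore B hC.radical ((Ideal.radical_mono (poissonCore_le B J)).trans hJ.isRadical)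
  obtain ⟨p, hp, hpJ⟩ := Ideal.exists_minimalPrimes_le (poissonCore_le B J)
  have hpC : p = poissonCore B J :=
    le_antisymm (le_poissonCore B (hC.of_mem_minimalPrimes hrad hp) hpJ) hp.1.2
  exact hpC ▸ hp.1.1

end CharZero

lemma IsLocallyClosed.exists_isOpen_forall_specializes_eq {X : Type*} [TopologicalSpace X]
    {p : X} (h : IsLocallyClosed ({p} : Set X)) :
    ∃ U : Set X, IsOpen U ∧ p ∈ U ∧ ∀ q ∈ U, p ⤳ q → q = p := by
  refine ⟨coborder {p}, isLocallyClosed_iff_isOpen_coborder.mp h, subset_coborder rfl, ?_⟩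
  intro q hq hpq
  rw [coborder_eq_union_closure_compl] at hq
  exact hq.resolve_right fun hq' => hq' (specializes_iff_mem_closure.mp hpq)

namespace PrimeSpectrum

variable {R : Type*} [CommRing R] {P : PrimeSpectrum R → Prop}

lemma isClosed_subtype_iff {A : Set {q : PrimeSpectrum R // P q}} :
    IsClosed A ↔ ∃ s : Set R, A = Subtype.val ⁻¹' zeroLocus s := by
  rw [isClosed_induced_iff]
  constructor
  · rintro ⟨t, ht, rfl⟩
    obtain ⟨s, rfl⟩ := (isClosed_iff_zeroLocus t).mp ht
    exact ⟨s, rfl⟩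
  · rintro ⟨s, rfl⟩
    exact ⟨_, isClosed_zeroLocus s, rfl⟩

lemma exists_notMem_of_isLocallyClosed_singleton {p : {q : PrimeSpectrum R // P q}}
    (h : IsLocallyClosed ({p} : Set {q : PrimeSpectrum R // P q})) :
    ∃ g ∉ p.1.asIdeal,
      ∀ q : {q : PrimeSpectrum R // P q}, p.1 ≤ q.1 → g ∉ q.1.asIdeal → q = p := by
  obtain ⟨U, hU, hpU, hspec⟩ := h.exists_isOpen_forall_specializes_eq
  obtain ⟨U₀, hU₀, rfl⟩ := isOpen_induced_iff.mp hU
  obtain ⟨_, ⟨g, rfl⟩, hpg, hgU⟩ :=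
    isTopologicalBasis_basic_opens.exists_subset_of_mem_open hpU hU₀
  refine ⟨g, hpg, fun q hpq hgq => hspec q (hgU hgq) ?_⟩
  exact Topology.IsInducing.subtypeVal.specializes_iff.mp ((le_iff_specializes _ _).mp hpq)

end PrimeSpectrum

/-- `g x ∈ jacobson Q = Q` for every `x` in the intersection. -/
theorem Ideal.IsPrime.sInf_isMaximal_notMem_eq {R : Type*} [CommRing R] [IsJacobsonRing R]
    {Q : Ideal R} (hQ : Q.IsPrime) {g : R} (hg : g ∉ Q) :
    sInf {n : Ideal R | n.IsMaximal ∧ Q ≤ n ∧ g ∉ n} = Q := by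
  refine le_antisymm (fun x hx => ?_) (le_sInf fun n hn => hn.2.1)
  have hgx : g * x ∈ Q.jacobson := Ideal.mem_sInf.mpr fun n ⟨hQn, hn⟩ => by
    by_cases hgn : g ∈ n
    · exact n.mul_mem_right x hgn
    · exact n.mul_mem_left g (Ideal.mem_sInf.mp hx ⟨hn, hQn, hgn⟩)
  rw [← Ideal.radical_eq_jacobson, hQ.radical] at hgx
  exact (hQ.mem_or_mem hgx).resolve_left hg

section PoissonCoreMap

variable {k R : Type*} [Field k] [CharZero k] [CommRing R] [Algebra k R] [IsNoetherianRing R]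
  (B : PoissonBracket k R)

def poissonCoreMap :
    {m : PrimeSpectrum R // m.asIdeal.IsMaximal} →
      {p : PrimeSpectrum R // IsPoissonPrimitive B p.asIdeal} :=
  fun m => ⟨⟨poissonCore B m.1.asIdeal, isPrime_poissonCore B m.2.isPrime⟩,
    m.1.asIdeal, m.2, rfl⟩

lemma poissonCoreMap_surjective : Function.Surjective (poissonCoreMap B) := by
  rintro ⟨Q, m, hm, hmQ⟩
  exact ⟨⟨⟨m, hm.isPrime⟩, hm⟩, Subtype.ext (PrimeSpectrum.ext hmQ)⟩

lemma continuous_poissonCoreMap : Continuous (poissonCoreMap B) := by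
  refine continuous_iff_isClosed.mpr fun X hX => ?_
  obtain ⟨s, rfl⟩ := PrimeSpectrum.isClosed_subtype_iff.mp hX
  refine PrimeSpectrum.isClosed_subtype_iff.mpr ⟨poissonSpan B s, Set.ext fun m => ?_⟩
  exact (poissonSpan_le_iff B).symm

lemma exists_notMem_forall_poissonCore_eq
    (hloc : ∀ p : {q : PrimeSpectrum R // IsPoissonIdeal B q.asIdeal},
      IsPoissonPrimitive B p.1.asIdeal →
        IsLocallyClosed ({p} : Set {q : PrimeSpectrum R // IsPoissonIdeal B q.asIdeal}))
    {Q : PrimeSpectrum R} (hQ : IsPoissonPrimitive B Q.asIdeal) :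
    ∃ g ∉ Q.asIdeal, ∀ n : Ideal R, n.IsMaximal → Q.asIdeal ≤ n → g ∉ n →
      poissonCore B n = Q.asIdeal := by
  have hQP := hQ.isPoissonIdeal
  obtain ⟨g, hgQ, hfiber⟩ :=
    PrimeSpectrum.exists_notMem_of_isLocallyClosed_singleton (hloc ⟨Q, hQP⟩ hQ)
  refine ⟨g, hgQ, fun n hn hQn hgn => ?_⟩
  have h := hfiber ⟨⟨poissonCore B n, isPrime_poissonCore B hn.isPrime⟩,
    isPoissonIdeal_poissonCore B n⟩ (le_poissonCore B hQP hQn)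
    (fun hg => hgn (poissonCore_le B n hg))
  exact congrArg (fun q => q.1.asIdeal) h

/-- If `poissonCoreMap⁻¹ X = V(s)`, then `Q ∈ X ↔ s ⊆ Q`: the maximal ideals above `Q` in
`D(g)` all lie over `Q`, exist, and meet in `Q`. -/
theorem isClosed_of_isClosed_preimage_poissonCoreMap [IsJacobsonRing R]
    (hloc : ∀ p : {q : PrimeSpectrum R // IsPoissonIdeal B q.asIdeal},
      IsPoissonPrimitive B p.1.asIdeal →
        IsLocallyClosed ({p} : Set {q : PrimeSpectrum R // IsPoissonIdeal B q.asIdeal}))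
    {X : Set {p : PrimeSpectrum R // IsPoissonPrimitive B p.asIdeal}}
    (hX : IsClosed (poissonCoreMap B ⁻¹' X)) : IsClosed X := by
  obtain ⟨s, hs⟩ := PrimeSpectrum.isClosed_subtype_iff.mp hX
  refine PrimeSpectrum.isClosed_subtype_iff.mpr ⟨s, Set.ext fun Q => ?_⟩
  obtain ⟨g, hgQ, hfiber⟩ := exists_notMem_forall_poissonCore_eq B hloc Q.2
  set N := {n : Ideal R | n.IsMaximal ∧ Q.1.asIdeal ≤ n ∧ g ∉ n}
  have hN : sInf N = Q.1.asIdeal := Q.1.2.sInf_isMaximal_notMem_eq hgQ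
  have hmap : ∀ n (hn : n ∈ N), poissonCoreMap B ⟨⟨n, hn.1.isPrime⟩, hn.1⟩ = Q :=
    fun n hn => Subtype.ext (PrimeSpectrum.ext (hfiber n hn.1 hn.2.1 hn.2.2))
  have hpre : ∀ n (hn : n ∈ N), Q ∈ X ↔ s ⊆ n := fun n hn => by
    rw [← hmap n hn, ← Set.mem_preimage, hs]
    rfl
  constructor
  · intro hQX x hx
    show x ∈ Q.1.asIdeal
    rw [← hN]
    exact Ideal.mem_sInf.mpr fun n hn => (hpre n hn).mp hQX hx
  · intro hsQ
    obtain ⟨n, hn⟩ : N.Nonempty := Set.nonempty_iff_ne_empty.mpr fun h =>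
      Q.1.2.ne_top (by rw [← hN, h, sInf_empty])
    exact (hpre n hn).mpr fun x hx => hn.2.1 (hsQ hx)

end PoissonCoreMap

theorem pPrim_quotient_topology_general (k R : Type*) [Field k] [CharZero k]
    [CommRing R] [Algebra k R] [Algebra.FiniteType k R]
    (B : PoissonBracket k R)
    (hloc : ∀ p : {q : PrimeSpectrum R // IsPoissonIdeal B q.asIdeal},
      IsPoissonPrimitive B p.1.asIdeal →
        IsLocallyClosed ({p} : Set {q : PrimeSpectrum R // IsPoissonIdeal B q.asIdeal})) :
    ∃ f : {m : PrimeSpectrum R // m.asIdeal.IsMaximal} →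
        {p : PrimeSpectrum R // IsPoissonPrimitive B p.asIdeal},
      (∀ m, (f m).1.asIdeal = poissonCore B m.1.asIdeal) ∧
      Continuous f ∧ Function.Surjective f ∧
      (∀ X : Set {p : PrimeSpectrum R // IsPoissonPrimitive B p.asIdeal},
        IsClosed X ↔ IsClosed (f ⁻¹' X)) := by
  have : IsNoetherianRing R := Algebra.FiniteType.isNoetherianRing k R
  have : IsJacobsonRing R := isJacobsonRing_of_finiteType (A := k)
  refine ⟨poissonCoreMap B, fun _ => rfl, continuous_poissonCoreMap B,
    poissonCoreMap_surjective B, fun X => ⟨fun hX => ?_, ?_⟩⟩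
  · exact hX.preimage (continuous_poissonCoreMap B)
  · exact isClosed_of_isClosed_preimage_poissonCoreMap B hloc

/-- over an algebraically closed field of characteristic zero, if every
Poisson-primitive ideal of an affine Poisson algebra is a locally closed point of the
Poisson prime spectrum, then the Poisson core map from the maximal spectrum to the
Poisson-primitive spectrum is a continuous surjection and the topology on the
Poisson-primitive spectrum is the quotient topology it induces. -/
theorem pPrim_quotient_topology (k R : Type*) [Field k] [CharZero k]
    [IsAlgClosed k] [CommRing R] [Algebra k R] [Algebra.FiniteType k R]
    (B : PoissonBracket k R)
    (hloc : ∀ p : {q : PrimeSpectrum R // IsPoissonIdeal B q.asIdeal},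
      IsPoissonPrimitive B p.1.asIdeal →
        IsLocallyClosed ({p} : Set {q : PrimeSpectrum R // IsPoissonIdeal B q.asIdeal})) :
    ∃ f : {m : PrimeSpectrum R // m.asIdeal.IsMaximal} →
        {p : PrimeSpectrum R // IsPoissonPrimitive B p.asIdeal},
      (∀ m, (f m).1.asIdeal = poissonCore B m.1.asIdeal) ∧
      Continuous f ∧ Function.Surjective f ∧
      (∀ X : Set {p : PrimeSpectrum R // IsPoissonPrimitive B p.asIdeal},
        IsClosed X ↔ IsClosed (f ⁻¹' X)) :=
  pPrim_quotient_topology_general k R B hloc
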